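/- arXiv:1807.10310 — 6 statements merged into one kernel-verified Lean document; each statement's English description precedes it below -/
import Mathlib

section
/- For every rational number r > 1 there exist a unique integer n ≥ 1 and unique integers a_1, …, a_n, all satisfying a_i ≥ 2, such that r = [a_1, …, a_n]^-. -/
/-- Negative continued fraction `[a_1, …, a_n]^-`:
`[a_n]^- = a_n` and `[a_i, …, a_n]^- = a_i − 1/[a_{i+1}, …, a_n]^-`. -/
noncomputable def ncf : List ℝ → ℝ
  | [] => 0
  | [a] => a
  | a :: b :: l => a - 1 / ncf (b :: l)

/-!
Every `[a_1, …, a_n]^-` with all `a_i ≥ 2` lies in `(a_1 - 1, a_1]`, with equality only for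
`n = 1`; so `a_1 = ⌈r⌉` is forced and uniqueness follows by induction. For existence, a
non-integral `r > 1` is written `r = ⌈r⌉ - t` with `t = fract (-r) ∈ (0, 1)`, and `1/t > 1`
has denominator `num t < den t = den r`, so induction on the denominator applies.
-/

open Set

theorem ncf_singleton (a : ℝ) : ncf [a] = a := rfl

theorem ncf_cons (a : ℝ) {l : List ℝ} (hl : l ≠ []) : ncf (a :: l) = a - 1 / ncf l := by
  cases l with
  | nil => exact absurd rfl hl
  | cons b l => rfl

theorem ncf_cons_mem_Ioo (a : ℝ) {l : List ℝ} (hl : l ≠ []) (h : 1 < ncf l) :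
    ncf (a :: l) ∈ Ioo (a - 1) a := by
  have hpos : 0 < 1 / ncf l := by positivity
  have hlt : 1 / ncf l < 1 := (div_lt_one (by linarith)).mpr h
  rw [ncf_cons a hl]
  constructor <;> linarith

theorem one_lt_ncf {l : List ℝ} (hl : l ≠ []) (h : ∀ x ∈ l, 2 ≤ x) : 1 < ncf l := by
  induction l with
  | nil => exact absurd rfl hl
  | cons a l ih =>
    have ha := h a List.mem_cons_self
    rcases eq_or_ne l [] with rfl | hl'
    · rw [ncf_singleton]; linarith
    · have := (ncf_cons_mem_Ioo a hl' (ih hl' fun x hx => h x (List.mem_cons_of_mem a hx))).1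
      linarith

theorem ncf_cons_mem_Ioo_of_two_le (a : ℝ) {l : List ℤ} (hl : l ≠ [])
    (h : ∀ b ∈ l, 2 ≤ b) :
    ncf (a :: l.map (↑)) ∈ Ioo (a - 1) a :=
  ncf_cons_mem_Ioo a (by simpa using hl)
    (one_lt_ncf (by simpa using hl) (by simpa using fun b hb => (Int.cast_le.mpr (h b hb))))

theorem ceil_ncf_cons (a : ℤ) {l : List ℤ} (h : ∀ b ∈ l, 2 ≤ b) :
    ⌈ncf ((a :: l).map (↑))⌉ = a := by
  rw [List.map_cons, Int.ceil_eq_iff]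
  rcases eq_or_ne l [] with rfl | hl
  · simp [ncf_singleton]
  · exact (ncf_cons_mem_Ioo_of_two_le (a : ℝ) hl h).imp id le_of_lt

theorem eq_of_ncf_eq {L M : List ℤ} (hL : L ≠ []) (hLb : ∀ b ∈ L, 2 ≤ b)
    (hM : M ≠ []) (hMb : ∀ b ∈ M, 2 ≤ b)
    (heq : ncf (L.map (↑)) = ncf (M.map (↑))) : L = M := by
  induction L generalizing M with
  | nil => exact absurd rfl hL
  | cons a l ih =>
    obtain ⟨c, m, rfl⟩ := List.exists_cons_of_ne_nil hM
    have hl : ∀ b ∈ l, 2 ≤ b := fun b hb => hLb b (List.mem_cons_of_mem a hb)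
    have hm : ∀ b ∈ m, 2 ≤ b := fun b hb => hMb b (List.mem_cons_of_mem c hb)
    obtain rfl : a = c := by rw [← ceil_ncf_cons a hl, heq, ceil_ncf_cons c hm]
    simp only [List.map_cons] at heq
    rcases eq_or_ne l [] with rfl | hl'
    · rcases eq_or_ne m [] with rfl | hm'
      · rfl
      · have := ncf_cons_mem_Ioo_of_two_le (a : ℝ) hm' hm
        simp [ncf_singleton, ← heq] at this
    · rcases eq_or_ne m [] with rfl | hm'
      · have := ncf_cons_mem_Ioo_of_two_le (a : ℝ) hl' hl
        simp [ncf_singleton, heq] at this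
      · rw [ncf_cons _ (by simpa using hl'), ncf_cons _ (by simpa using hm'), sub_right_inj,
          one_div, one_div, inv_inj] at heq
        rw [ih hl' hl hm' hm heq]

theorem Rat.den_inv_lt_den {q : ℚ} (h0 : 0 < q) (h1 : q < 1) : q⁻¹.den < q.den := by
  have hnum : q.num < q.den := Rat.num_lt_denom_iff.mpr h1
  have hinv : (q⁻¹.den : ℤ) = q.num := by
    rw [Rat.den_inv_of_ne_zero h0.ne', Int.natAbs_of_nonneg (Rat.num_pos.mpr h0).le]
  omega

theorem exists_ncf_eq (r : ℚ) (hr : 1 < r) :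
    ∃ L : List ℤ, L ≠ [] ∧ (∀ b ∈ L, 2 ≤ b) ∧ ncf (L.map (↑)) = (r : ℝ) := by
  induction hd : r.den using Nat.strong_induction_on generalizing r with
  | _ d ih =>
  subst hd
  by_cases hint : r.den = 1
  · have hnum : (r.num : ℚ) = r := (Rat.den_eq_one_iff r).mp hint
    refine ⟨[r.num], by simp, ?_, ?_⟩
    · simp only [List.mem_singleton, forall_eq]
      exact_mod_cast hnum ▸ hr
    · rw [List.map_singleton, ncf_singleton]
      exact_mod_cast hnum
  set t := Int.fract (-r)
  have hrt : r = ⌈r⌉ - t := by simp [t, Int.fract, Int.floor_neg]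
  have htden : t.den = r.den := by rw [Rat.den_intFract, Rat.neg_den]
  have ht0 : 0 < t :=
    (Int.fract_nonneg _).lt_of_ne' fun (h : t = 0) => hint (by rw [← htden, h]; rfl)
  have ht1 : t < 1 := Int.fract_lt_one _
  obtain ⟨M, hM, hMb, hMt⟩ :=
    ih _ (htden ▸ Rat.den_inv_lt_den ht0 ht1) t⁻¹ (one_lt_inv₀ ht0 |>.mpr ht1) rfl
  have hceil : (2 : ℤ) ≤ ⌈r⌉ := by
    have : (1 : ℚ) < ⌈r⌉ := by linarith
    exact_mod_cast this
  refine ⟨⌈r⌉ :: M, List.cons_ne_nil _ _, ?_, ?_⟩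
  · exact List.forall_mem_cons.mpr ⟨hceil, hMb⟩
  · rw [List.map_cons, ncf_cons _ (by simpa using hM), hMt, Rat.cast_inv, one_div, inv_inv]
    exact_mod_cast hrt.symm

-- `L.map fun b => (b : ℝ)` elaborates by first lifting `L` to `List ℝ` through the list monad.
theorem map_lift_intCast (L : List ℤ) : (L.map fun b => (b : ℝ)) = L.map (↑) := by
  simp [List.map_eq_flatMap]

/-- For every rational `r > 1` there exist a unique `n ≥ 1` and unique integers
`a_1, …, a_n`, all `≥ 2`, with `r = [a_1, …, a_n]^-`. -/
theorem stmt0 (r : ℚ) (hr : 1 < r) :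
    ∃! L : List ℤ, L ≠ [] ∧ (∀ b ∈ L, 2 ≤ b) ∧
      ncf (L.map fun b => (b : ℝ)) = (r : ℝ) := by
  simp only [map_lift_intCast]
  obtain ⟨L, hL, hLb, hLr⟩ := exists_ncf_eq r hr
  refine ⟨L, ⟨hL, hLb, hLr⟩, fun M ⟨hM, hMb, hMr⟩ => ?_⟩
  exact eq_of_ncf_eq hM hMb hL hLb (hMr.trans hLr.symm)
end

section
/- Let n ≥ 1 and for each i ∈ {1, …, n} let A_i be an l_i × l_i real matrix and w_i ∈ ℝ^{l_i} a column vector. Let A be the square matrix of size 1 + l_1 + ⋯ + l_n whose top-left entry is 1, whose first row consists (after the top-left entry) of the blocks w_1ᵀ, …, w_nᵀ, whose first column consists (after the top-left entry) of the blocks w_1, …, w_n, whose remaining diagonal blocks are A_1, …, A_n, and whose remaining entries are 0. Then det A = ∏_{i=1}^n det A_i + ∑_{i=1}^n det(B_i) · ∏_{j ≠ i} det A_j, where B_i is the (l_i+1)×(l_i+1) matrix obtained from A_i by bordering it with first row (0, w_iᵀ) and first column (0, w_iᵀ)ᵀ. -/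
/-! Expand the determinant along the first row, which is `e₀ + ∑ᵢ (0, …, wᵢᵀ, …, 0)`.
With first row `e₀` the matrix reduces to the block diagonal matrix of the `Aᵢ`. With first row
the `wᵢ`-part, moving block `i` next to the corner makes the matrix block lower triangular with
diagonal blocks `Bᵢ` and `Aⱼ` (`j ≠ i`). -/

open Matrix

/-- The square matrix of size `1 + l_1 + ⋯ + l_n` with top-left entry `1`, first row
(after the corner) the blocks `w_1ᵀ, …, w_nᵀ`, first column (after the corner) the
blocks `w_1, …, w_n`, remaining diagonal blocks `A_1, …, A_n`, and zeros elsewhere. -/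
noncomputable def bigA {n : ℕ} (l : Fin n → ℕ)
    (A : ∀ i, Matrix (Fin (l i)) (Fin (l i)) ℝ) (w : ∀ i, Fin (l i) → ℝ) :
    Matrix (Option (Σ i, Fin (l i))) (Option (Σ i, Fin (l i))) ℝ :=
  Matrix.of fun p q =>
    match p, q with
    | none, none => 1
    | none, some ⟨i, j⟩ => w i j
    | some ⟨i, j⟩, none => w i j
    | some ⟨i, j⟩, some ⟨i', j'⟩ =>
        if h : i = i' then A i j (Fin.cast (by rw [h]) j') else 0

/-- The `(m+1) × (m+1)` matrix obtained from `A` by bordering it with first row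
`(0, wᵀ)` and first column `(0, wᵀ)ᵀ`. -/
noncomputable def borderB {m : ℕ} (A : Matrix (Fin m) (Fin m) ℝ) (w : Fin m → ℝ) :
    Matrix (Option (Fin m)) (Option (Fin m)) ℝ :=
  Matrix.of fun p q =>
    match p, q with
    | none, none => 0
    | none, some j => w j
    | some j, none => w j
    | some j, some j' => A j j'

section
variable {R : Type*} [CommRing R]

theorem Matrix.det_updateRow_finset_sum {m : Type*} [Fintype m] [DecidableEq m]
    (M : Matrix m m R) (r : m) {α : Type*} (s : Finset α) (u : α → m → R) :
    (M.updateRow r (∑ a ∈ s, u a)).det = ∑ a ∈ s, (M.updateRow r (u a)).det :=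
  detRowAlternating.map_update_sum s r u M

theorem Matrix.det_blockDiagonal' {o : Type*} [Fintype o] [DecidableEq o] {m : o → Type*}
    [∀ k, Fintype (m k)] [∀ k, DecidableEq (m k)] (M : ∀ k, Matrix (m k) (m k) R) :
    (blockDiagonal' M).det = ∏ k, (M k).det := by
  let : LinearOrder o := LinearOrder.lift' (Fintype.equivFin o) (Equiv.injective _)
  rw [(blockTriangular_blockDiagonal' M).det_fintype]
  refine Finset.prod_congr rfl fun k _ => ?_
  rw [← det_submatrix_equiv_self (Equiv.sigmaSubtype k).symm]
  congr 1
  ext x y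
  exact blockDiagonal'_apply_eq M k x y

theorem Matrix.det_updateRow_none_single {κ : Type*} [Fintype κ] [DecidableEq κ]
    (M : Matrix (Option κ) (Option κ) R) :
    (M.updateRow none (Pi.single none 1)).det = (M.submatrix some some).det := by
  rw [← det_reindex_self (Equiv.optionEquivSumPUnit.{0} κ)]
  have : reindex (Equiv.optionEquivSumPUnit.{0} κ) (Equiv.optionEquivSumPUnit.{0} κ)
      (M.updateRow none (Pi.single none 1)) =
      fromBlocks (M.submatrix some some) (of fun i _ => M (some i) none) 0 1 := by
    ext (i | _) (j | _) <;> simp [updateRow_apply]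
  rw [this, det_fromBlocks_zero₂₁, det_one, mul_one]

end

section

variable {n : ℕ} (l : Fin n → ℕ) (A : ∀ i, Matrix (Fin (l i)) (Fin (l i)) ℝ)
  (w : ∀ i, Fin (l i) → ℝ)

def borderRowBlock (i : Fin n) : Option (Σ j, Fin (l j)) → ℝ
  | none => 0
  | some ⟨j, k⟩ => if j = i then w j k else 0

theorem bigA_none_eq_single_add_sum :
    bigA l A w none = Pi.single none 1 + ∑ i, borderRowBlock l w i := by
  funext q
  rcases q with _ | ⟨j, k⟩
  · simp [bigA, borderRowBlock]
  · simp [bigA, borderRowBlock, Finset.sum_apply]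

theorem bigA_submatrix_some : (bigA l A w).submatrix some some = blockDiagonal' A := by
  ext ⟨i, j⟩ ⟨i', j'⟩
  rcases eq_or_ne i i' with rfl | h
  · simp [bigA, blockDiagonal'_apply_eq]
  · simp [bigA, h, blockDiagonal'_apply_ne A _ _ h]

theorem det_bigA_updateRow_single :
    ((bigA l A w).updateRow none (Pi.single none 1)).det = ∏ i, (A i).det := by
  rw [det_updateRow_none_single, bigA_submatrix_some, det_blockDiagonal']

def splitBlockEquiv (i : Fin n) :
    Option (Σ j, Fin (l j)) ≃
      (Option (Fin (l i)) ⊕ Σ j : {j : Fin n // j ≠ i}, Fin (l j.1)) where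
  toFun
    | none => Sum.inl none
    | some ⟨j, k⟩ =>
        if h : j = i then Sum.inl (some (Fin.cast (congrArg l h) k))
        else Sum.inr ⟨⟨j, h⟩, k⟩
  invFun
    | Sum.inl none => none
    | Sum.inl (some k) => some ⟨i, k⟩
    | Sum.inr ⟨⟨j, _⟩, k⟩ => some ⟨j, k⟩
  left_inv := by
    rintro (_ | ⟨j, k⟩)
    · rfl
    · by_cases h : j = i
      · subst h; simp
      · simp [h]
  right_inv := by
    rintro ((_ | k) | ⟨⟨j, h⟩, k⟩)
    · rfl
    · simp
    · simp [h]

theorem det_bigA_updateRow_borderRowBlock (i : Fin n) :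
    ((bigA l A w).updateRow none (borderRowBlock l w i)).det =
      (borderB (A i) (w i)).det * ∏ j ∈ Finset.univ.erase i, (A j).det := by
  have hreindex : (bigA l A w).updateRow none (borderRowBlock l w i) =
      (fromBlocks (borderB (A i) (w i)) 0
        (of fun (p : Σ j : {j : Fin n // j ≠ i}, Fin (l j.1)) (q : Option (Fin (l i))) =>
          q.elim (w p.1.1 p.2) fun _ => 0)
        (blockDiagonal' fun j : {j : Fin n // j ≠ i} => A j.1)).submatrix
        (splitBlockEquiv l i) (splitBlockEquiv l i) := by
    ext (_ | ⟨j, k⟩) (_ | ⟨j', k'⟩) <;>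
      simp only [splitBlockEquiv, borderRowBlock, borderB, bigA, updateRow_apply,
        Equiv.coe_fn_mk, submatrix_apply, of_apply] <;>
      split_ifs <;> subst_vars <;> simp_all [blockDiagonal'_apply] <;> contradiction
  rw [hreindex, det_submatrix_equiv_self, det_fromBlocks_zero₁₂, det_blockDiagonal']
  congr 1
  exact (Finset.prod_subtype _ (fun x => by simp) fun j => (A j).det).symm

end

theorem stmt6_general (n : ℕ) (l : Fin n → ℕ)
    (A : ∀ i, Matrix (Fin (l i)) (Fin (l i)) ℝ) (w : ∀ i, Fin (l i) → ℝ) :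
    (bigA l A w).det =
      ∏ i, (A i).det +
        ∑ i, (borderB (A i) (w i)).det * ∏ j ∈ Finset.univ.erase i, (A j).det := by
  have hrow : bigA l A w = (bigA l A w).updateRow none
      (Pi.single none 1 + ∑ i, borderRowBlock l w i) := by
    rw [← bigA_none_eq_single_add_sum, updateRow_eq_self]
  rw [hrow, det_updateRow_add, det_updateRow_finset_sum, det_bigA_updateRow_single]
  simp only [det_bigA_updateRow_borderRowBlock]

/-- `det A = ∏ᵢ det Aᵢ + ∑ᵢ det Bᵢ · ∏_{j ≠ i} det Aⱼ`, where `A` is the bordered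
block matrix and `Bᵢ` is `Aᵢ` bordered by `wᵢ`. -/
theorem stmt6 (n : ℕ) (hn : 1 ≤ n) (l : Fin n → ℕ)
    (A : ∀ i, Matrix (Fin (l i)) (Fin (l i)) ℝ) (w : ∀ i, Fin (l i) → ℝ) :
    (bigA l A w).det =
      ∏ i, (A i).det +
        ∑ i, (borderB (A i) (w i)).det * ∏ j ∈ Finset.univ.erase i, (A j).det :=
  stmt6_general n l A w
end

section
/- Let h and l be integers with 2 ≤ l ≤ h, and let a_1, …, a_h be integers with a_i ≥ 2 for all i. Let u and v be integers such that u ≠ 0, such that v = 0 only if l = h, and such that if u = −v and u² = 1 then l > 2 or a_1 > 2. Set p = D(a_1, …, a_h), q = D(a_2, …, a_h), P = D(a_1, …, a_l) and Q = u²·D(a_2, …, a_l) + 2uv + v²·D(a_1, …, a_{l−1}). Then Q/P ≥ q/p, and equality holds only if u² = 1 and v = 0. -/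
/-- Tridiagonal determinant `D(a_1, …, a_n)`. -/
def D : List ℤ → ℤ
  | [] => 1
  | [a] => a
  | a :: b :: l => a * D (b :: l) - D l

/-!
After clearing denominators, split `(a_1, …, a_h) = x ++ y` with `x = (a_1, …, a_l)`. The
expansion `D(x ++ y) = D(x) D(y) - D(x.dropLast) D(y.tail)` together with the Cassini
identity for `x` gives `Q p - q P = W p - D(a_{l+2}, …, a_h)` with
`W = Q - D(a_2, …, a_l) = (u² - 1) D(a_2, …, a_l) + 2uv + v² D(a_1, …, a_{l-1})`
(and `Q p - q P = W P` when `l = h`). Completing the square shows `W > 0` unless `v = 0`,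
while `D(a_{l+2}, …, a_h) < p` by monotonicity of continuants with entries `≥ 2`.
-/

lemma D_cons_cons (a b : ℤ) (l : List ℤ) : D (a :: b :: l) = a * D (b :: l) - D l := rfl

lemma D_cons (a : ℤ) {x : List ℤ} (hx : x ≠ []) : D (a :: x) = a * D x - D x.tail := by
  obtain ⟨b, y, rfl⟩ := List.exists_cons_of_ne_nil hx
  rfl

lemma D_append : ∀ (x y : List ℤ), x ≠ [] → y ≠ [] →
    D (x ++ y) = D x * D y - D x.dropLast * D y.tail
  | [a], y, _, hy => by simp [D_cons a hy, D]
  | [a, b], y, _, hy => by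
    simp only [List.cons_append, List.nil_append, D_cons_cons, D_cons b hy]
    simp [D]
    ring
  | a :: b :: c :: x, y, _, hy => by
    have hb := D_append (b :: c :: x) y (List.cons_ne_nil _ _) hy
    have hc := D_append (c :: x) y (List.cons_ne_nil _ _) hy
    simp only [List.cons_append, List.dropLast_cons_cons] at hb hc ⊢
    rw [D_cons_cons, hb, hc, D_cons_cons a b, D_cons_cons a b, D_cons_cons b c]
    ring

/-- The determinant of the product of the 2 × 2 transfer matrices `!![a, -1; 1, 0]`. -/
lemma D_cassini : ∀ (x : List ℤ), 2 ≤ x.length →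
    D x.dropLast * D x.tail - D x * D x.tail.dropLast = 1
  | [a, b], _ => by simp [D]
  | a :: b :: c :: x, _ => by
    have ih := D_cassini (b :: c :: x) (by simp)
    simp only [List.tail_cons, List.dropLast_cons_cons, D_cons_cons] at ih ⊢
    linear_combination ih

section Monotone

variable {x y : List ℤ}

lemma D_pos_and_lt_D_cons : ∀ (x : List ℤ), (∀ b ∈ x, 2 ≤ b) →
    0 < D x ∧ ∀ c : ℤ, 2 ≤ c → D x < D (c :: x)
  | [], _ => ⟨one_pos, fun c hc => by simp [D]; omega⟩
  | b :: y, hx => by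
    obtain ⟨hy, hlt⟩ := D_pos_and_lt_D_cons y fun c hc => hx c (List.mem_cons_of_mem _ hc)
    have hb := hlt b (hx b List.mem_cons_self)
    refine ⟨hy.trans hb, fun c hc => ?_⟩
    rw [D_cons c (List.cons_ne_nil b y), List.tail_cons]
    nlinarith

lemma D_pos (hx : ∀ b ∈ x, 2 ≤ b) : 0 < D x := (D_pos_and_lt_D_cons x hx).1

lemma D_lt_D_cons (hx : ∀ b ∈ x, 2 ≤ b) {c : ℤ} (hc : 2 ≤ c) : D x < D (c :: x) :=
  (D_pos_and_lt_D_cons x hx).2 c hc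

lemma D_le_D_append (hxy : ∀ b ∈ x ++ y, 2 ≤ b) : D y ≤ D (x ++ y) := by
  induction x with
  | nil => rfl
  | cons a x ih =>
    simp only [List.cons_append, List.mem_cons, forall_eq_or_imp] at hxy ⊢
    exact (ih hxy.2).trans (D_lt_D_cons hxy.2 hxy.1).le

lemma add_length_le_D_cons {b : ℤ} (h : ∀ c ∈ b :: y, 2 ≤ c) :
    b + y.length ≤ D (b :: y) := by
  induction y generalizing b with
  | nil => simp [D]
  | cons c y ih =>
    simp only [List.mem_cons, forall_eq_or_imp] at h
    have hc := ih (b := c) (by simpa using h.2)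
    have hlt := D_lt_D_cons h.2.2 h.2.1
    rw [D_cons_cons, List.length_cons]
    push_cast at hc ⊢
    nlinarith

end Monotone

lemma quadratic_form_pos {A B u v : ℤ} (hA : 1 ≤ A) (hB : 2 ≤ B) (hu : u ≠ 0) (hv : v ≠ 0)
    (huv : u = -v → u ^ 2 = 1 → 2 < B) :
    0 < (u ^ 2 - 1) * A + 2 * u * v + v ^ 2 * B := by
  have hu2 : 1 ≤ u ^ 2 := by nlinarith [Int.one_le_abs hu, sq_abs u]
  have hv2 : 1 ≤ v ^ 2 := by nlinarith [Int.one_le_abs hv, sq_abs v]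
  have key : (u ^ 2 - 1) * A + 2 * u * v + v ^ 2 * B =
      (u + v) ^ 2 + (u ^ 2 - 1) * (A - 1) + (v ^ 2 * (B - 1) - 1) := by ring
  have hA' : 0 ≤ (u ^ 2 - 1) * (A - 1) := mul_nonneg (by linarith) (by linarith)
  have hB' : 0 ≤ v ^ 2 * (B - 1) - 1 := by nlinarith
  rw [key]
  by_contra! hle
  have huv0 : u = -v := by nlinarith [sq_nonneg (u + v)]
  have hv1 : v ^ 2 = 1 := by nlinarith [sq_nonneg (u + v)]
  have hB2 : B = 2 := by nlinarith [sq_nonneg (u + v)]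
  have := huv huv0 (by rw [huv0, neg_sq, hv1])
  omega

lemma D_tail_append_mul (x y : List ℤ) (c : ℤ) (hx : 2 ≤ x.length) :
    D (x ++ c :: y).tail * D x = D x.tail * D (x ++ c :: y) + D y := by
  have hx0 : x ≠ [] := List.ne_nil_of_length_pos (by omega)
  have hx1 : x.tail ≠ [] := List.ne_nil_of_length_pos (by simp; omega)
  rw [List.tail_append_of_ne_nil hx0, D_append _ _ hx0 (List.cons_ne_nil c y),
    D_append _ _ hx1 (List.cons_ne_nil c y), List.tail_cons]
  linear_combination D y * D_cassini x hx

theorem D_tail_append_mul_le (x y : List ℤ) (hxy : ∀ b ∈ x ++ y, 2 ≤ b)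
    (hx : 2 ≤ x.length) {u v : ℤ} (hu : u ≠ 0) (hv : v = 0 → y = [])
    (huv : u = -v → u ^ 2 = 1 → 2 < D x.dropLast) :
    D (x ++ y).tail * D x ≤
        (u ^ 2 * D x.tail + 2 * u * v + v ^ 2 * D x.dropLast) * D (x ++ y) ∧
      (D (x ++ y).tail * D x =
          (u ^ 2 * D x.tail + 2 * u * v + v ^ 2 * D x.dropLast) * D (x ++ y) →
        u ^ 2 = 1 ∧ v = 0) := by
  obtain ⟨b, c, m, rfl⟩ : ∃ b c m, x = b :: c :: m := by
    match x, hx with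
    | b :: c :: m, _ => exact ⟨b, c, m, rfl⟩
  have hx2 : ∀ d ∈ b :: c :: m, 2 ≤ d := fun d hd => hxy d (List.mem_append_left _ hd)
  have hP : 0 < D (b :: c :: m) := D_pos hx2
  have hP' : 0 < D (c :: m) := D_pos fun d hd => hx2 d (List.mem_cons_of_mem _ hd)
  have hP'' : 2 ≤ D (b :: c :: m).dropLast := by
    have hsub : ∀ d ∈ (b :: c :: m).dropLast, 2 ≤ d := fun d hd =>
      hx2 d (List.dropLast_subset _ hd)
    rw [List.dropLast_cons_cons] at hsub ⊢
    have := add_length_le_D_cons hsub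
    linarith [hx2 b List.mem_cons_self, Int.natCast_nonneg (c :: m).dropLast.length]
  have hu2 : 1 ≤ u ^ 2 := by nlinarith [Int.one_le_abs hu, sq_abs u]
  rcases eq_or_ne v 0 with rfl | hv0
  · obtain rfl := hv rfl
    simp only [List.append_nil, List.tail_cons, mul_zero, add_zero, zero_pow two_ne_zero,
      zero_mul, and_true]
    have hPP := mul_pos hP' hP
    refine ⟨by nlinarith, fun h => ?_⟩
    have : (u ^ 2 - 1) * (D (c :: m) * D (b :: c :: m)) = 0 := by linear_combination -h
    simpa [hPP.ne', sub_eq_zero] using this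
  have hW := quadratic_form_pos hP' hP'' hu hv0 huv
  suffices hlt : D (b :: c :: m ++ y).tail * D (b :: c :: m) <
      (u ^ 2 * D (b :: c :: m).tail + 2 * u * v + v ^ 2 * D (b :: c :: m).dropLast) *
        D (b :: c :: m ++ y) from ⟨hlt.le, fun h => absurd h hlt.ne⟩
  rcases y with _ | ⟨d, y⟩
  · simp only [List.append_nil, List.tail_cons]
    nlinarith
  · have hy : D y < D (b :: c :: m ++ d :: y) :=
      (D_lt_D_cons (fun e he => hxy e (by simp [he])) (hxy d (by simp))).trans_le
        (D_le_D_append hxy)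
    have hp : 0 ≤ D (b :: c :: m ++ d :: y) := (D_pos hxy).le
    rw [D_tail_append_mul _ y d hx, List.tail_cons]
    nlinarith [mul_le_mul_of_nonneg_right (Int.add_one_le_of_lt hW) hp]

lemma two_lt_D_take_ofFn {n : ℕ} (a : Fin (n + 1) → ℤ) (ha : ∀ i, 2 ≤ a i) {k : ℕ}
    (hk : 1 ≤ k) (hkn : k ≤ n + 1) (h : 1 < k ∨ 2 < a 0) : 2 < D ((List.ofFn a).take k) := by
  obtain ⟨k, rfl⟩ : ∃ j, k = j + 1 := ⟨k - 1, by omega⟩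
  have hall : ∀ b ∈ (List.ofFn a).take (k + 1), 2 ≤ b := fun b hb =>
    List.forall_mem_ofFn_iff.2 ha b (List.mem_of_mem_take hb)
  rw [List.ofFn_succ, List.take_succ_cons] at hall ⊢
  have hge := add_length_le_D_cons hall
  simp only [List.length_take, List.length_ofFn] at hge
  have := ha 0
  omega

/-- With `p = D(a_1,…,a_h)`, `q = D(a_2,…,a_h)`, `P = D(a_1,…,a_l)` and
`Q = u²·D(a_2,…,a_l) + 2uv + v²·D(a_1,…,a_{l−1})`, one has `Q/P ≥ q/p`, with
equality only if `u² = 1` and `v = 0`. -/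
theorem stmt10 (h l : ℕ) (hl : 2 ≤ l) (hlh : l ≤ h)
    (a : Fin h → ℤ) (ha : ∀ i, 2 ≤ a i)
    (u v : ℤ) (hu : u ≠ 0) (hv : v = 0 → l = h)
    (huv : u = -v → u ^ 2 = 1 → 2 < l ∨ 2 < a ⟨0, by omega⟩) :
    ((D (List.ofFn a).tail : ℝ) / (D (List.ofFn a) : ℝ) ≤
      ((u ^ 2 * D (((List.ofFn a).take l).tail) + 2 * u * v +
          v ^ 2 * D ((List.ofFn a).take (l - 1)) : ℤ) : ℝ) /
        (D ((List.ofFn a).take l) : ℝ)) ∧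
    (((u ^ 2 * D (((List.ofFn a).take l).tail) + 2 * u * v +
          v ^ 2 * D ((List.ofFn a).take (l - 1)) : ℤ) : ℝ) /
        (D ((List.ofFn a).take l) : ℝ) =
        (D (List.ofFn a).tail : ℝ) / (D (List.ofFn a) : ℝ) →
      u ^ 2 = 1 ∧ v = 0) := by
  obtain ⟨n, rfl⟩ : ∃ n, h = n + 1 := ⟨h - 1, by omega⟩
  set L := List.ofFn a
  have hL2 : ∀ b ∈ L, 2 ≤ b := List.forall_mem_ofFn_iff.2 ha
  have hsplit : L.take l ++ L.drop l = L := List.take_append_drop l L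
  have hlen : (L.take l).length = l := by simp [L]; omega
  have hdropLast : (L.take l).dropLast = L.take (l - 1) := by
    rw [List.dropLast_eq_take, hlen, List.take_take, min_eq_left (by omega)]
  have hB : u = -v → u ^ 2 = 1 → 2 < D (L.take l).dropLast := fun h1 h2 => by
    rw [hdropLast]
    exact two_lt_D_take_ofFn a ha (by omega) (by omega) ((huv h1 h2).imp (by omega) id)
  obtain ⟨hle, heq⟩ := D_tail_append_mul_le (L.take l) (L.drop l) (by rwa [hsplit])
    (by omega) hu (fun h0 => by simp [L]; omega) hB
  rw [hsplit, hdropLast] at hle heq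
  have hp : (0 : ℝ) < D L := by exact_mod_cast D_pos hL2
  have hP : (0 : ℝ) < D (L.take l) := by
    exact_mod_cast D_pos fun b hb => hL2 b (List.take_subset _ _ hb)
  rw [div_le_div_iff₀ hp hP, div_eq_div_iff hP.ne' hp.ne']
  exact ⟨by exact_mod_cast hle, fun h => heq (by exact_mod_cast h.symm)⟩
end

section
/- Let k ≥ 3 and e ≥ 1 be integers, let h_1, …, h_k ≥ 1 and let a^i_j (1 ≤ i ≤ k, 1 ≤ j ≤ h_i) be integers with every a^i_j ≥ 2, and set p_i = D(a^i_1, …, a^i_{h_i}) and q_i = D(a^i_2, …, a^i_{h_i}). If there exist m ≥ 1 and a (1 + h_1 + ⋯ + h_k) × m integer matrix M with M·Mᵀ = Q_Γ(e), then there is a partition of {1, 2, …, k} into at most e nonempty classes such that for each class C one has ∑_{i∈C} q_i/p_i ≤ 1. (This is the lattice-theoretic content of Theorem 1.1: when the Seifert fibered space Y = S²(e; p_1/q_1, …, p_k/q_k) in standard form bounds a smooth 4-manifold W with σ(W) = −b_2(W) and with H_1(Y;ℚ) → H_1(W;ℚ) injective, Donaldson's theorem produces such a matrix M.) -/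
/-!
Write `c` and `x^i_j` for the rows of `M` at the central vertex and at the chain vertices.
Since `c · x^i_0 = -1`, every chain `i` has a coordinate `s_i` at which both `c` and `x^i_0` are
nonzero; the classes are the fibres of `i ↦ s_i`, and there are at most
`#{s | c_s ≠ 0} ≤ ∑ c_s² = e` of them.

Fix a class with common coordinate `s`. Let `P^i_n` be the continuant of the first `n` weights of
chain `i`. The vectors `F^i_n = ∑_{j ≤ n} P^i_j x^i_j` are a Gram–Schmidt basis of the chains:
pairwise orthogonal (also across chains) with `|F^i_n|² = P^i_n P^i_{n+1}`. Bessel's inequality for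
the unit vector `e_s` bounds `∑_i ∑_n W_{i,n}² / (P^i_n P^i_{n+1})` by `1`, where the integers
`W_{i,n} = e_s · F^i_n` satisfy `W_{i,0} ≠ 0` and `P^i_{n+1} ∣ W_{i,n+1} - W_{i,n}`. On the other
hand `q_i / p_i = ∑_n 1 / (P^i_n P^i_{n+1})` telescopes, and every `W_{i,n} = 0` is compensated by
the previous term, where `W_{i,n-1}` is then a nonzero multiple of `P^i_n`.
-/

open Matrix

/-- The `n×n` tridiagonal matrix with diagonal entries `a_1, …, a_n` and entries `−1`
immediately above and below the diagonal. -/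
def tridiag {n : ℕ} (a : Fin n → ℤ) : Matrix (Fin n) (Fin n) ℤ :=
  Matrix.of fun i j =>
    if i = j then a i
    else if (i : ℕ) + 1 = (j : ℕ) ∨ (j : ℕ) + 1 = (i : ℕ) then -1 else 0

/-- The star-shaped plumbing matrix `Q_Γ(e)`: central vertex of weight `e` joined to
the starting vertex of each of the `k` linear chains with weights `a^i_1, …, a^i_{l i}`. -/
def QGamma {k : ℕ} (e : ℤ) (l : Fin k → ℕ) (a : ∀ i, Fin (l i) → ℤ) :
    Matrix (Option (Σ i, Fin (l i))) (Option (Σ i, Fin (l i))) ℤ :=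
  Matrix.of fun p q =>
    match p, q with
    | none, none => e
    | none, some ⟨_, j⟩ => if (j : ℕ) = 0 then -1 else 0
    | some ⟨_, j⟩, none => if (j : ℕ) = 0 then -1 else 0
    | some s, some t =>
        if h : s.1 = t.1 then tridiag (a s.1) s.2 (Fin.cast (by rw [h]) t.2) else 0

open Finset
open scoped RealInnerProductSpace

/- `cont a n = D(a 0, …, a (n - 1))` and `contTail a n = D(a 1, …, a (n - 1))`, computed by
recursion at the far end of the chain. Unlike `D` of the empty tail, `contTail a 0 = 0`, so that
`contTail a n / cont a n` starts at `0`. -/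
def cont (a : ℕ → ℤ) : ℕ → ℤ
  | 0 => 1
  | 1 => a 0
  | n + 2 => a (n + 1) * cont a (n + 1) - cont a n

def contTail (a : ℕ → ℤ) : ℕ → ℤ
  | 0 => 0
  | n + 1 => cont (fun i => a (i + 1)) n

theorem contTail_add_two (a : ℕ → ℤ) (n : ℕ) :
    contTail a (n + 2) = a (n + 1) * contTail a (n + 1) - contTail a n := by
  cases n <;> simp [contTail, cont]

namespace cont

variable (a : ℕ → ℤ)

theorem add_two_eq_front (n : ℕ) :
    cont a (n + 2) = a 0 * cont (fun i => a (i + 1)) (n + 1) - cont (fun i => a (i + 2)) n := by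
  induction n using Nat.strong_induction_on generalizing a with
  | _ n ih =>
    match n with
    | 0 => simp only [cont]; ring
    | 1 => simp only [cont]; ring
    | n + 2 =>
      have h1 := ih (n + 1) (by omega) a
      have h0 := ih n (by omega) a
      simp only [cont] at h1 h0 ⊢
      rw [h1, h0]
      ring

theorem mul_contTail_sub_mul_contTail (n : ℕ) :
    cont a (n + 1) * contTail a n - cont a n * contTail a (n + 1) = -1 := by
  induction n with
  | zero => simp [cont, contTail]
  | succ n ih =>
    rw [contTail_add_two]
    simp only [cont]
    linear_combination ih

variable {a}

theorem pos_and_lt_succ (ha : ∀ n, 2 ≤ a n) (n : ℕ) : 0 < cont a n ∧ cont a n < cont a (n + 1) := by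
  induction n with
  | zero => simp only [cont]; constructor <;> linarith [ha 0]
  | succ n ih =>
    refine ⟨by linarith [ih.1], ?_⟩
    simp only [cont]
    nlinarith [ha (n + 1), ih.1, ih.2]

theorem pos (ha : ∀ n, 2 ≤ a n) (n : ℕ) : 0 < cont a n := (pos_and_lt_succ ha n).1

theorem strictMono (ha : ∀ n, 2 ≤ a n) : StrictMono (cont a) :=
  strictMono_nat_of_lt_succ fun n => (pos_and_lt_succ ha n).2

theorem contTail_div_eq_sum (h : ∀ n, cont a n ≠ 0) (L : ℕ) :
    (contTail a L : ℝ) / cont a L = ∑ n ∈ range L, 1 / ((cont a n : ℝ) * cont a (n + 1)) := by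
  induction L with
  | zero => simp [contTail]
  | succ L ih =>
    have hL : (cont a L : ℝ) ≠ 0 := by exact_mod_cast h L
    have hL' : (cont a (L + 1) : ℝ) ≠ 0 := by exact_mod_cast h (L + 1)
    have hid : (cont a (L + 1) * contTail a L - cont a L * contTail a (L + 1) : ℝ) = -1 := by
      exact_mod_cast mul_contTail_sub_mul_contTail a L
    rw [sum_range_succ, ← ih]
    field_simp
    linear_combination -hid

end cont

theorem D_ofFn_eq_cont {n : ℕ} (f : Fin n → ℤ) (a : ℕ → ℤ) (h : ∀ j, f j = a j) :
    D (List.ofFn f) = cont a n := by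
  induction n using Nat.strong_induction_on generalizing a with
  | _ n ih =>
    match n with
    | 0 => simp [D, cont]
    | 1 => simp [D, cont, h]
    | n + 2 =>
      have h1 := ih (n + 1) (by omega) (fun j => f j.succ) (fun i => a (i + 1)) (by simp [h])
      have h0 := ih n (by omega) (fun j => f j.succ.succ) (fun i => a (i + 2)) (by simp [h])
      rw [List.ofFn_succ, List.ofFn_succ, D, ← List.ofFn_succ (f := fun j => f j.succ), h1, h0,
        cont.add_two_eq_front, h 0]
      rfl

theorem D_tail_ofFn_eq_contTail {n : ℕ} (f : Fin n → ℤ) (hn : 0 < n) (a : ℕ → ℤ)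
    (h : ∀ j, f j = a j) : D (List.ofFn f).tail = contTail a n := by
  obtain ⟨n, rfl⟩ := Nat.exists_eq_add_of_lt hn
  rw [List.ofFn_succ, List.tail_cons]
  exact D_ofFn_eq_cont _ _ fun j => by simp [h]

/- Inductive step for the excess `S = ∑ (W n ^ 2 - 1) / (P n * P (n + 1))`: a vanishing `w` costs
`1 / (p * p')`, which the excess `1 / p` left by a previous multiple of `p` pays for. -/
theorem sum_sq_excess_step {p p' w : ℤ} {S : ℝ} (hp : 0 < p) (hpp' : p < p') (hS : 0 ≤ S)
    (hw : w = 0 → 1 / (p : ℝ) ≤ S) :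
    0 ≤ S + ((w : ℝ) ^ 2 - 1) / (p * p') ∧
      (p' ∣ w → 1 / (p' : ℝ) ≤ S + ((w : ℝ) ^ 2 - 1) / (p * p')) := by
  have hpR : (0 : ℝ) < p := by exact_mod_cast hp
  have hpp'R : (p : ℝ) + 1 ≤ p' := by exact_mod_cast hpp'
  have hp'R : (0 : ℝ) < p' := by linarith
  have hprod : (0 : ℝ) < p * p' := by positivity
  rcases eq_or_ne w 0 with rfl | hw0
  · have key : 1 / (p' : ℝ) ≤ S + (((0 : ℤ) : ℝ) ^ 2 - 1) / (p * p') := by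
      have : 1 / (p' : ℝ) ≤ 1 / p - 1 / (p * p') := by
        rw [div_sub_div _ _ hpR.ne' hprod.ne', div_le_div_iff₀ hp'R (by positivity)]
        nlinarith
      simp only [Int.cast_zero, zero_pow two_ne_zero, zero_sub, neg_div]
      linarith [hw rfl]
    exact ⟨le_trans (by positivity) key, fun _ => key⟩
  · have hw1 : (1 : ℝ) ≤ (w : ℝ) ^ 2 := by
      have : (1 : ℤ) ≤ w ^ 2 := by nlinarith [Int.one_le_abs hw0, sq_abs w]
      exact_mod_cast this
    refine ⟨add_nonneg hS (div_nonneg (by linarith) hprod.le), fun hdvd => ?_⟩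
    have hsq : (p' : ℝ) ^ 2 ≤ (w : ℝ) ^ 2 := by
      have hle : p' ≤ |w| := Int.le_of_dvd (abs_pos.2 hw0) ((dvd_abs _ _).2 hdvd)
      have : p' ^ 2 ≤ w ^ 2 := by nlinarith [sq_abs w]
      exact_mod_cast this
    have : 1 / (p' : ℝ) ≤ ((w : ℝ) ^ 2 - 1) / (p * p') := by
      rw [div_le_div_iff₀ hp'R hprod]
      nlinarith
    linarith

theorem sum_one_div_le_sum_sq_div (P W : ℕ → ℤ) (hP0 : 0 < P 0) (hP : StrictMono P)
    (hW0 : W 0 ≠ 0) (hW : ∀ n, P (n + 1) ∣ W (n + 1) - W n) (L : ℕ) :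
    ∑ n ∈ range L, 1 / ((P n : ℝ) * P (n + 1)) ≤
      ∑ n ∈ range L, (W n : ℝ) ^ 2 / (P n * P (n + 1)) := by
  set S : ℕ → ℝ := fun L => ∑ n ∈ range L, ((W n : ℝ) ^ 2 - 1) / (P n * P (n + 1))
  have hpos : ∀ n, 0 < P n := fun n => hP0.trans_le (hP.monotone n.zero_le)
  have key : ∀ L, 0 ≤ S (L + 1) ∧ (P (L + 1) ∣ W L → 1 / (P (L + 1) : ℝ) ≤ S (L + 1)) := by
    intro L
    induction L with
    | zero => simpa [S] using sum_sq_excess_step hP0 (hP (Nat.lt_succ_self 0)) le_rfl (absurd · hW0)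
    | succ L ih =>
      rw [show S (L + 2) = S (L + 1) + _ from sum_range_succ _ _]
      exact sum_sq_excess_step (hpos _) (hP (Nat.lt_succ_self _)) ih.1
        fun h0 => ih.2 (by simpa [h0] using hW L)
  have hS : 0 ≤ S L := by
    cases L with
    | zero => simp [S]
    | succ L => exact (key L).1
  simp only [S, sub_div, sum_sub_distrib] at hS
  linarith

theorem sum_inner_sq_div_norm_sq_le {ι E : Type*} [NormedAddCommGroup E] [InnerProductSpace ℝ E]
    (s : Finset ι) (F : ι → E) (hF : (s : Set ι).Pairwise fun α β => ⟪F α, F β⟫ = 0) (x : E) :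
    ∑ α ∈ s, ⟪F α, x⟫ ^ 2 / ‖F α‖ ^ 2 ≤ ‖x‖ ^ 2 := by
  set c : ι → ℝ := fun α => ⟪F α, x⟫ / ‖F α‖ ^ 2
  have hc : ∀ α, c α * ⟪F α, x⟫ = ⟪F α, x⟫ ^ 2 / ‖F α‖ ^ 2 := fun α => by ring
  have hc' : ∀ α, c α * c α * ‖F α‖ ^ 2 = ⟪F α, x⟫ ^ 2 / ‖F α‖ ^ 2 := fun α => by
    rcases eq_or_ne (F α) 0 with h | h
    · simp [c, h]
    · have : ‖F α‖ ≠ 0 := norm_ne_zero_iff.2 h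
      simp only [c]
      field_simp
  set y := ∑ α ∈ s, c α • F α
  have hxy : ⟪x, y⟫ = ∑ α ∈ s, ⟪F α, x⟫ ^ 2 / ‖F α‖ ^ 2 := by
    simp only [y, inner_sum, inner_smul_right]
    exact sum_congr rfl fun α _ => by rw [real_inner_comm, hc]
  have hyy : ‖y‖ ^ 2 = ∑ α ∈ s, ⟪F α, x⟫ ^ 2 / ‖F α‖ ^ 2 := by
    rw [← real_inner_self_eq_norm_sq]
    simp only [y, inner_sum, sum_inner, inner_smul_left, inner_smul_right]
    refine sum_congr rfl fun α hα => ?_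
    rw [sum_eq_single_of_mem α hα fun β hβ hne => by simp [hF hβ hα hne], ← hc' α,
      real_inner_self_eq_norm_sq]
    simp only [conj_trivial]; ring
  nlinarith [norm_sub_sq_real x y, sq_nonneg ‖x - y‖]

section LinearChain

variable {E : Type*} [NormedAddCommGroup E] [InnerProductSpace ℝ E]

def IsLinearChain (a : ℕ → ℤ) (x : ℕ → E) (L : ℕ) : Prop :=
  ∀ j < L, ∀ k < L,
    ⟪x j, x k⟫ = if j = k then (a j : ℝ) else if j + 1 = k ∨ k + 1 = j then -1 else 0

def chainVec (a : ℕ → ℤ) (x : ℕ → E) (n : ℕ) : E :=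
  ∑ j ∈ range (n + 1), (cont a j : ℝ) • x j

variable {a : ℕ → ℤ} {x : ℕ → E} {L : ℕ}

theorem inner_chainVec_succ (hx : IsLinearChain a x L) {n : ℕ} (hn : n + 1 < L) :
    ⟪chainVec a x n, x (n + 1)⟫ = -cont a n := by
  rw [chainVec, sum_inner, sum_eq_single n]
  · rw [inner_smul_left, hx n (by omega) (n + 1) hn]; simp
  · intro j hj hjn
    rw [mem_range] at hj
    rw [inner_smul_left, hx j (by omega) (n + 1) hn, if_neg (by omega), if_neg (by omega), mul_zero]
  · simp

theorem inner_chainVec_of_le (hx : IsLinearChain a x L) {n k : ℕ} (hn : n < L) (hk : k ≤ n) :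
    ⟪chainVec a x n, x k⟫ = if k = n then (cont a (n + 1) : ℝ) else 0 := by
  induction n generalizing k with
  | zero =>
    obtain rfl : k = 0 := by omega
    rw [chainVec, sum_range_one, inner_smul_left, hx 0 hn 0 hn]
    simp [cont]
  | succ n ih =>
    rw [chainVec, sum_range_succ, ← chainVec, inner_add_left, inner_smul_left]
    rcases Nat.lt_or_eq_of_le hk with hk | rfl
    · rw [ih (by omega) (by omega), hx (n + 1) hn k (by omega)]
      by_cases hkn : k = n
      · simp [hkn]
      · simp [hkn, show n + 1 ≠ k by omega, show n + 1 + 1 ≠ k by omega, show k ≠ n + 1 by omega]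
    · rw [inner_chainVec_succ hx hn, hx _ hn _ hn]
      simp only [map_intCast, cont]; push_cast; ring

theorem inner_chainVec_of_lt (hx : IsLinearChain a x L) {n n' : ℕ} (hn : n < n') (hn' : n' < L) :
    ⟪chainVec a x n, chainVec a x n'⟫ = 0 := by
  rw [real_inner_comm, show chainVec a x n = ∑ k ∈ range (n + 1), (cont a k : ℝ) • x k
    from rfl, inner_sum]
  refine sum_eq_zero fun k hk => ?_
  rw [mem_range] at hk
  rw [inner_smul_right, inner_chainVec_of_le hx hn' (by omega), if_neg (by omega), mul_zero]

theorem norm_chainVec_sq (hx : IsLinearChain a x L) {n : ℕ} (hn : n < L) :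
    ‖chainVec a x n‖ ^ 2 = cont a n * cont a (n + 1) := by
  rw [← real_inner_self_eq_norm_sq]
  nth_rewrite 2 [chainVec]
  rw [inner_sum]
  rw [sum_eq_single n]
  · rw [inner_smul_right, inner_chainVec_of_le hx hn le_rfl, if_pos rfl]
  · intro k hk hkn
    rw [mem_range] at hk
    rw [inner_smul_right, inner_chainVec_of_le hx hn (by omega), if_neg hkn, mul_zero]
  · simp

theorem inner_chainVec_eq_sum {y : E} {v : ℕ → ℤ} (hv : ∀ j < L, ⟪x j, y⟫ = v j) {n : ℕ}
    (hn : n < L) : ⟪chainVec a x n, y⟫ = ∑ j ∈ range (n + 1), (cont a j * v j : ℤ) := by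
  rw [chainVec, sum_inner]
  push_cast
  refine sum_congr rfl fun j hj => ?_
  rw [mem_range] at hj
  rw [inner_smul_left, hv j (by omega)]
  simp

theorem inner_chainVec_chainVec_eq_zero {a' : ℕ → ℤ} {x' : ℕ → E} (h : ∀ j k, ⟪x j, x' k⟫ = 0)
    (n n' : ℕ) : ⟪chainVec a x n, chainVec a' x' n'⟫ = 0 := by
  simp [chainVec, sum_inner, inner_sum, inner_smul_left, inner_smul_right, h]

theorem contTail_div_cont_le_sum (ha : ∀ n, 2 ≤ a n) (hx : IsLinearChain a x L) {y : E}
    {v : ℕ → ℤ} (hv : ∀ j < L, ⟪x j, y⟫ = v j) (hv0 : v 0 ≠ 0) :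
    (contTail a L : ℝ) / cont a L ≤
      ∑ n ∈ range L, ⟪chainVec a x n, y⟫ ^ 2 / ‖chainVec a x n‖ ^ 2 := by
  set W : ℕ → ℤ := fun n => ∑ j ∈ range (n + 1), cont a j * v j
  have hW : ∀ n, cont a (n + 1) ∣ W (n + 1) - W n := fun n =>
    ⟨v (n + 1), by simp only [W, sum_range_succ _ (n + 1)]; ring⟩
  rw [cont.contTail_div_eq_sum (fun n => (cont.pos ha n).ne')]
  calc _ ≤ ∑ n ∈ range L, (W n : ℝ) ^ 2 / (cont a n * cont a (n + 1)) :=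
        sum_one_div_le_sum_sq_div _ W (cont.pos ha 0) (cont.strictMono ha)
          (by simpa [W, cont] using hv0) hW L
    _ = _ := sum_congr rfl fun n hn => by
        rw [mem_range] at hn
        rw [inner_chainVec_eq_sum hv hn, norm_chainVec_sq hx hn]

end LinearChain

theorem sum_contTail_div_cont_le_norm_sq {ι E : Type*} [NormedAddCommGroup E]
    [InnerProductSpace ℝ E] (C : Finset ι) (L : ι → ℕ) (a : ι → ℕ → ℤ) (ha : ∀ i n, 2 ≤ a i n)
    (x : ι → ℕ → E) (hx : ∀ i ∈ C, IsLinearChain (a i) (x i) (L i))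
    (horth : ∀ i ∈ C, ∀ i' ∈ C, i ≠ i' → ∀ j k, ⟪x i j, x i' k⟫ = 0) (y : E) (v : ι → ℕ → ℤ)
    (hv : ∀ i ∈ C, ∀ j < L i, ⟪x i j, y⟫ = v i j) (hv0 : ∀ i ∈ C, v i 0 ≠ 0) :
    ∑ i ∈ C, (contTail (a i) (L i) : ℝ) / cont (a i) (L i) ≤ ‖y‖ ^ 2 := by
  set F : (Σ _ : ι, ℕ) → E := fun p => chainVec (a p.1) (x p.1) p.2
  have hF : (C.sigma fun i => range (L i) : Set (Σ _ : ι, ℕ)).Pairwise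
      fun p q => ⟪F p, F q⟫ = 0 := by
    rintro ⟨i, n⟩ hp ⟨i', n'⟩ hq hne
    simp only [coe_sigma, Set.mem_sigma_iff, mem_coe, mem_range] at hp hq
    rcases eq_or_ne i i' with rfl | hii'
    · have hnn' : n ≠ n' := fun h => hne (h ▸ rfl)
      rcases hnn'.lt_or_gt with h | h
      · exact inner_chainVec_of_lt (hx i hp.1) h hq.2
      · rw [real_inner_comm]; exact inner_chainVec_of_lt (hx i hp.1) h hp.2
    · exact inner_chainVec_chainVec_eq_zero (horth i hp.1 i' hq.1 hii') n n'
  calc _ ≤ ∑ i ∈ C, ∑ n ∈ range (L i), ⟪F ⟨i, n⟩, y⟫ ^ 2 / ‖F ⟨i, n⟩‖ ^ 2 :=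
        sum_le_sum fun i hi =>
          contTail_div_cont_le_sum (ha i) (hx i hi) (hv i hi) (hv0 i hi)
    _ = ∑ p ∈ C.sigma fun i => range (L i), ⟪F p, y⟫ ^ 2 / ‖F p‖ ^ 2 :=
        (sum_sigma C (fun i => range (L i)) fun p => ⟪F p, y⟫ ^ 2 / ‖F p‖ ^ 2).symm
    _ ≤ ‖y‖ ^ 2 := sum_inner_sq_div_norm_sq_le _ F hF y

section Plumbing

variable {k : ℕ} {e : ℤ} {l : Fin k → ℕ} {a : ∀ i, Fin (l i) → ℤ}

theorem QGamma_none_none : QGamma e l a none none = e := rfl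

theorem QGamma_none_some (i : Fin k) (j : Fin (l i)) :
    QGamma e l a none (some ⟨i, j⟩) = if (j : ℕ) = 0 then -1 else 0 := rfl

theorem QGamma_some_some_self (i : Fin k) (j j' : Fin (l i)) :
    QGamma e l a (some ⟨i, j⟩) (some ⟨i, j'⟩) = tridiag (a i) j j' := by
  simp [QGamma]

theorem QGamma_some_some_of_ne {i i' : Fin k} (h : i ≠ i') (j : Fin (l i)) (j' : Fin (l i')) :
    QGamma e l a (some ⟨i, j⟩) (some ⟨i', j'⟩) = 0 := by
  simp [QGamma, h]

theorem sum_D_tail_div_D_le_norm_sq {E : Type*} [NormedAddCommGroup E] [InnerProductSpace ℝ E]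
    (ha : ∀ i j, 2 ≤ a i j) (hl : ∀ i, 1 ≤ l i) (X : (Σ i, Fin (l i)) → E)
    (hX : ∀ r r', ⟪X r, X r'⟫ = QGamma e l a (some r) (some r')) (y : E) (v : (Σ i, Fin (l i)) → ℤ)
    (hv : ∀ r, ⟪X r, y⟫ = v r) (C : Finset (Fin k)) (hC : ∀ i ∈ C, v ⟨i, ⟨0, hl i⟩⟩ ≠ 0) :
    ∑ i ∈ C, (D (List.ofFn (a i)).tail : ℝ) / D (List.ofFn (a i)) ≤ ‖y‖ ^ 2 := by
  -- weights extended by `2` past the end of each chain, so that `cont.pos` applies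
  set aN : Fin k → ℕ → ℤ := fun i n => if h : n < l i then a i ⟨n, h⟩ else 2
  set x : Fin k → ℕ → E := fun i n => if h : n < l i then X ⟨i, ⟨n, h⟩⟩ else 0
  set vN : Fin k → ℕ → ℤ := fun i n => if h : n < l i then v ⟨i, ⟨n, h⟩⟩ else 0
  have haN : ∀ i (j : Fin (l i)), a i j = aN i j := fun i j => by simp [aN]
  have hD : ∀ i, D (List.ofFn (a i)) = cont (aN i) (l i) := fun i => D_ofFn_eq_cont _ _ (haN i)
  have hDt : ∀ i, D (List.ofFn (a i)).tail = contTail (aN i) (l i) := fun i =>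
    D_tail_ofFn_eq_contTail _ (hl i) _ (haN i)
  simp only [hD, hDt]
  refine sum_contTail_div_cont_le_norm_sq C l aN ?_ x ?_ ?_ y vN ?_ ?_
  · intro i n
    simp only [aN]
    split_ifs
    exacts [ha _ _, le_rfl]
  · intro i _ j hj k hk
    simp [x, hj, hk, hX, QGamma_some_some_self, tridiag, aN, Fin.ext_iff]
  · intro i _ i' _ hii' j k
    simp only [x]
    split_ifs <;> simp [hX, QGamma_some_some_of_ne hii']
  · intro i _ j hj
    simp [x, vN, hj, hv]
  · intro i hi
    simpa [vN, hl i] using ⟨hl i, hC i hi⟩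

theorem sum_D_tail_div_D_le_one (ha : ∀ i j, 2 ≤ a i j) (hl : ∀ i, 1 ≤ l i) {m : ℕ}
    (M : Matrix (Option (Σ i, Fin (l i))) (Fin m) ℤ) (hM : M * M.transpose = QGamma e l a)
    (s₀ : Fin m) (C : Finset (Fin k)) (hC : ∀ i ∈ C, M (some ⟨i, ⟨0, hl i⟩⟩) s₀ ≠ 0) :
    ∑ i ∈ C, (D (List.ofFn (a i)).tail : ℝ) / D (List.ofFn (a i)) ≤ 1 := by
  have h := sum_D_tail_div_D_le_norm_sq ha hl
    (fun r => (WithLp.toLp 2 fun s => (M (some r) s : ℝ) : EuclideanSpace ℝ (Fin m)))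
    (fun r r' => by
      rw [← hM]
      simp [EuclideanSpace.inner_toLp_toLp, dotProduct, Matrix.mul_apply, mul_comm])
    (EuclideanSpace.single s₀ 1) (fun r => M (some r) s₀)
    (fun r => by simp [EuclideanSpace.inner_single_right]) C hC
  simpa using h

end Plumbing

theorem exists_partition_fibres {ι κ : Type*} [Fintype ι] [DecidableEq ι] [DecidableEq κ]
    (g : ι → κ) :
    ∃ P : Finset (Finset ι), P.card ≤ (univ.image g).card ∧
      (∀ C ∈ P, C.Nonempty) ∧ (∀ C ∈ P, ∀ C' ∈ P, C ≠ C' → Disjoint C C') ∧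
      (∀ i, ∃ C ∈ P, i ∈ C) ∧ ∀ C ∈ P, ∃ s, ∀ i ∈ C, g i = s := by
  refine ⟨(univ.image g).image fun s => ({i | g i = s} : Finset ι), card_image_le, ?_, ?_, ?_, ?_⟩
  · simp only [mem_image, mem_univ, true_and]
    rintro _ ⟨_, ⟨i, rfl⟩, rfl⟩
    exact ⟨i, by simp⟩
  · simp only [mem_image, mem_univ, true_and]
    rintro _ ⟨_, ⟨i, rfl⟩, rfl⟩ _ ⟨_, ⟨i', rfl⟩, rfl⟩ hne
    refine disjoint_left.2 fun j hj hj' => hne ?_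
    simp only [mem_filter, mem_univ, true_and] at hj hj'
    rw [← hj, hj']
  · intro i
    exact ⟨_, mem_image_of_mem _ (mem_image_of_mem g (mem_univ i)), by simp⟩
  · simp only [mem_image, mem_univ, true_and]
    rintro _ ⟨s, -, rfl⟩
    exact ⟨s, by simp⟩

theorem card_image_le_sum_sq {ι κ : Type*} [Fintype ι] [Fintype κ] [DecidableEq κ] (c : κ → ℤ)
    (g : ι → κ) (hg : ∀ i, c (g i) ≠ 0) : ((univ.image g).card : ℤ) ≤ ∑ s, c s ^ 2 := by
  rw [card_eq_sum_ones, Nat.cast_sum, Nat.cast_one]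
  calc _ ≤ ∑ s ∈ univ.image g, c s ^ 2 := sum_le_sum fun s hs => by
        obtain ⟨i, -, rfl⟩ := mem_image.1 hs
        have := hg i
        have : 0 < c (g i) ^ 2 := by positivity
        omega
    _ ≤ ∑ s, c s ^ 2 := sum_le_sum_of_subset_of_nonneg (subset_univ _)
        fun s _ _ => sq_nonneg _

theorem stmt12_general (k : ℕ) (e : ℤ)
    (l : Fin k → ℕ) (hl : ∀ i, 1 ≤ l i)
    (a : ∀ i, Fin (l i) → ℤ) (ha : ∀ i j, 2 ≤ a i j)
    (m : ℕ) (M : Matrix (Option (Σ i, Fin (l i))) (Fin m) ℤ)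
    (hM : M * M.transpose = QGamma e l a) :
    ∃ P : Finset (Finset (Fin k)),
      (P.card : ℤ) ≤ e ∧
      (∀ C ∈ P, C.Nonempty) ∧
      (∀ C ∈ P, ∀ C' ∈ P, C ≠ C' → Disjoint C C') ∧
      (∀ i : Fin k, ∃ C ∈ P, i ∈ C) ∧
      (∀ C ∈ P, ∑ i ∈ C,
        (D (List.ofFn (a i)).tail : ℝ) / (D (List.ofFn (a i)) : ℝ) ≤ 1) := by
  have hcoord : ∀ i, ∃ s, M none s ≠ 0 ∧ M (some ⟨i, ⟨0, hl i⟩⟩) s ≠ 0 := fun i => by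
    have h : ∑ s, M none s * M (some ⟨i, ⟨0, hl i⟩⟩) s = -1 := by
      simpa [Matrix.mul_apply, QGamma_none_some] using
        congrFun (congrFun hM none) (some ⟨i, ⟨0, hl i⟩⟩)
    obtain ⟨s, -, hs⟩ := exists_ne_zero_of_sum_ne_zero (h.trans_ne (by norm_num))
    exact ⟨s, mul_ne_zero_iff.1 hs⟩
  choose g hg using hcoord
  obtain ⟨P, hcard, hne, hdisj, hcover, hfib⟩ := exists_partition_fibres g
  refine ⟨P, ?_, hne, hdisj, hcover, fun C hC => ?_⟩
  · have he : ∑ s, M none s ^ 2 = e := by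
      simpa [Matrix.mul_apply, QGamma_none_none, sq] using congrFun (congrFun hM none) none
    calc (P.card : ℤ) ≤ (univ.image g).card := by exact_mod_cast hcard
      _ ≤ ∑ s, M none s ^ 2 := card_image_le_sum_sq _ g fun i => (hg i).1
      _ = e := he
  · obtain ⟨s₀, hs₀⟩ := hfib C hC
    exact sum_D_tail_div_D_le_one ha hl M hM s₀ C fun i hi => hs₀ i hi ▸ (hg i).2

/-- If the star-shaped plumbing lattice `(ℤ^{1+Σlᵢ}, Q_Γ(e))` embeds into a standard
diagonal lattice, then `{1,…,k}` can be partitioned into at most `e` nonempty classes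
such that `∑_{i∈C} qᵢ/pᵢ ≤ 1` for each class `C`. -/
theorem stmt12 (k : ℕ) (hk : 3 ≤ k) (e : ℤ) (he : 1 ≤ e)
    (l : Fin k → ℕ) (hl : ∀ i, 1 ≤ l i)
    (a : ∀ i, Fin (l i) → ℤ) (ha : ∀ i j, 2 ≤ a i j)
    (m : ℕ) (hm : 1 ≤ m) (M : Matrix (Option (Σ i, Fin (l i))) (Fin m) ℤ)
    (hM : M * M.transpose = QGamma e l a) :
    ∃ P : Finset (Finset (Fin k)),
      (P.card : ℤ) ≤ e ∧
      (∀ C ∈ P, C.Nonempty) ∧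
      (∀ C ∈ P, ∀ C' ∈ P, C ≠ C' → Disjoint C C') ∧
      (∀ i : Fin k, ∃ C ∈ P, i ∈ C) ∧
      (∀ C ∈ P, ∑ i ∈ C,
        (D (List.ofFn (a i)).tail : ℝ) / (D (List.ofFn (a i)) : ℝ) ≤ 1) :=
  stmt12_general k e l hl a ha m M hM
end

section
/- Let Q be the 9×9 star-shaped plumbing matrix Q_Γ(1) with central weight 1 and three chains with weight sequences (3), (5) and (3, 2, 2, 2, 2, 2) (this is the intersection matrix of the positive definite plumbing bounded by the Seifert fibered integral homology sphere S²(1; 3, 5, 13/6), since [3,2,2,2,2,2]^- = 13/6). Then there is no m ≥ 1 and no 9×m integer matrix M with M·Mᵀ = Q; that is, this plumbing lattice does not embed into any standard diagonal lattice. (Hence the converse of Theorem 1.1 fails: 1/3 + 1/5 + 6/13 ≤ 1 holds, yet no embedding exists.) -/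
/-!
The vectors `v₀ + vᵢ` (`i = 1, 2, 3`) and the last five vertices of the long chain span the
orthogonal complement of the unit vector `v₀`, and their Gram matrix is even and unimodular
(it is `E₈`). An even unimodular lattice `L` has no nonzero embedding into `ℤᵐ`: by
unimodularity the orthogonal projection `p` of a standard basis vector `eⱼ` onto `L ⊗ ℚ` lies
in `L`, so `|p|² = ⟨p, eⱼ⟩` is an even integer with `|p|² ≤ |eⱼ|² = 1`; hence `p = 0`, and `L`
is orthogonal to every `eⱼ`.
-/

open Matrix

/-- The 9×9 star-shaped plumbing matrix `Q_Γ(1)` with central weight `1` and three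
chains with weight sequences `(3)`, `(5)` and `(3, 2, 2, 2, 2, 2)`: the intersection
matrix of the positive definite plumbing bounded by `S²(1; 3, 5, 13/6)`.
Vertex order: central vertex, chain 1, chain 2, chain 3. -/
def Q17 : Matrix (Fin 9) (Fin 9) ℤ :=
  !![ 1, -1, -1, -1,  0,  0,  0,  0,  0;
     -1,  3,  0,  0,  0,  0,  0,  0,  0;
     -1,  0,  5,  0,  0,  0,  0,  0,  0;
     -1,  0,  0,  3, -1,  0,  0,  0,  0;
      0,  0,  0, -1,  2, -1,  0,  0,  0;
      0,  0,  0,  0, -1,  2, -1,  0,  0;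
      0,  0,  0,  0,  0, -1,  2, -1,  0;
      0,  0,  0,  0,  0,  0, -1,  2, -1;
      0,  0,  0,  0,  0,  0,  0, -1,  2]

theorem Matrix.even_dotProduct_mulVec_self {ι : Type*} [Fintype ι] {G : Matrix ι ι ℤ}
    (hG : G.IsSymm) (hdiag : ∀ i, Even (G i i)) (x : ι → ℤ) : Even (x ⬝ᵥ G *ᵥ x) := by
  rw [← ZMod.intCast_eq_zero_iff_even]
  -- mod 2, the terms at `(i, j)` and `(j, i)` cancel and the diagonal terms vanish
  simp only [dotProduct, mulVec, Finset.mul_sum, ← Fintype.sum_prod_type', Int.cast_sum]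
  refine Finset.sum_ninvolution Prod.swap (fun ⟨i, j⟩ => ?_) (fun ⟨i, j⟩ h hij => ?_)
    (fun _ => Finset.mem_univ _) Prod.swap_swap
  · push_cast [Prod.swap, hG.apply i j]
    linear_combination (G i j * x i * x j : ZMod 2) * ZMod.natCast_self 2
  · obtain ⟨rfl, -⟩ : j = i ∧ i = j := by simpa using hij
    apply h
    push_cast
    rw [ZMod.intCast_eq_zero_iff_even.mpr (hdiag j)]
    ring

theorem two_mul_apply_le_dotProduct_self_add_one {κ : Type*} [Fintype κ] (y : κ → ℤ) (j : κ) :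
    2 * y j ≤ y ⬝ᵥ y + 1 := by
  have hj : y j * y j ≤ y ⬝ᵥ y :=
    Finset.single_le_sum (f := fun k => y k * y k) (fun k _ => mul_self_nonneg (y k))
      (Finset.mem_univ j)
  nlinarith [sq_nonneg (y j - 1)]

theorem Matrix.eq_zero_of_mul_transpose_eq_of_even {ι κ : Type*} [Fintype ι] [DecidableEq ι]
    [Fintype κ] {G : Matrix ι ι ℤ} (hunimod : IsUnit G.det) (heven : ∀ x, Even (x ⬝ᵥ G *ᵥ x))
    {N : Matrix ι κ ℤ} (hN : N * Nᵀ = G) : N = 0 := by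
  ext i j
  -- With `nᵢ` the rows of `N`: `w i = ⟨nᵢ, eⱼ⟩`, and `y = ∑ xᵢ nᵢ` is the projection of `eⱼ`.
  set w : ι → ℤ := fun i => N i j
  set x := G⁻¹ *ᵥ w
  set y := Nᵀ *ᵥ x
  have hGx : G *ᵥ x = w := by rw [mulVec_mulVec, mul_nonsing_inv G hunimod, one_mulVec]
  have hNy : N *ᵥ y = w := by rw [mulVec_mulVec, hN, hGx]
  have hyy : y ⬝ᵥ y = x ⬝ᵥ w := by
    rw [← hNy, dotProduct_mulVec x N y, ← mulVec_transpose]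
  have hyj : y j = x ⬝ᵥ w := by
    simp only [y, w, mulVec, dotProduct, transpose_apply, mul_comm]
  have hy : y = 0 := by
    obtain ⟨t, ht⟩ := hGx ▸ heven x
    have hle := two_mul_apply_le_dotProduct_self_add_one y j
    have hnonneg : 0 ≤ y ⬝ᵥ y := Finset.sum_nonneg fun k _ => mul_self_nonneg (y k)
    rw [← dotProduct_self_eq_zero]
    omega
  simpa [hy] using (congrFun hNy i).symm

def Q17ComplBasis : Matrix (Fin 8) (Fin 9) ℤ :=
  !![1, 1, 0, 0, 0, 0, 0, 0, 0;
     1, 0, 1, 0, 0, 0, 0, 0, 0;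
     1, 0, 0, 1, 0, 0, 0, 0, 0;
     0, 0, 0, 0, 1, 0, 0, 0, 0;
     0, 0, 0, 0, 0, 1, 0, 0, 0;
     0, 0, 0, 0, 0, 0, 1, 0, 0;
     0, 0, 0, 0, 0, 0, 0, 1, 0;
     0, 0, 0, 0, 0, 0, 0, 0, 1]

def gramE8 : Matrix (Fin 8) (Fin 8) ℤ :=
  !![ 2, -1, -1,  0,  0,  0,  0,  0;
     -1,  4, -1,  0,  0,  0,  0,  0;
     -1, -1,  2, -1,  0,  0,  0,  0;
      0,  0, -1,  2, -1,  0,  0,  0;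
      0,  0,  0, -1,  2, -1,  0,  0;
      0,  0,  0,  0, -1,  2, -1,  0;
      0,  0,  0,  0,  0, -1,  2, -1;
      0,  0,  0,  0,  0,  0, -1,  2]

def gramE8Inv : Matrix (Fin 8) (Fin 8) ℤ :=
  !![22, 13, 30, 25, 20, 15, 10, 5;
     13,  8, 18, 15, 12,  9,  6, 3;
     30, 18, 42, 35, 28, 21, 14, 7;
     25, 15, 35, 30, 24, 18, 12, 6;
     20, 12, 28, 24, 20, 15, 10, 5;
     15,  9, 21, 18, 15, 12,  8, 4;
     10,  6, 14, 12, 10,  8,  6, 3;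
      5,  3,  7,  6,  5,  4,  3, 2]

theorem Q17ComplBasis_mul_Q17_mul_transpose :
    Q17ComplBasis * Q17 * Q17ComplBasis.transpose = gramE8 := by
  decide

theorem gramE8_mul_gramE8Inv : gramE8 * gramE8Inv = 1 := by
  decide

theorem gramE8_isSymm : gramE8.IsSymm := by
  decide

theorem even_dotProduct_gramE8_mulVec_self (x : Fin 8 → ℤ) : Even (x ⬝ᵥ gramE8 *ᵥ x) :=
  even_dotProduct_mulVec_self gramE8_isSymm (by decide) x

/-- The plumbing lattice of `S²(1; 3, 5, 13/6)` does not embed into any standard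
diagonal lattice: there is no integer matrix `M` with `M·Mᵀ = Q_Γ(1)`. -/
theorem stmt17 :
    ¬ ∃ (m : ℕ) (_ : 1 ≤ m) (M : Matrix (Fin 9) (Fin m) ℤ),
      M * M.transpose = Q17 := by
  rintro ⟨m, -, M, hM⟩
  have hN : (Q17ComplBasis * M) * (Q17ComplBasis * M)ᵀ = gramE8 := by
    rw [transpose_mul, Matrix.mul_assoc, ← Matrix.mul_assoc M, hM, ← Matrix.mul_assoc,
      Q17ComplBasis_mul_Q17_mul_transpose]
  have hN0 := eq_zero_of_mul_transpose_eq_of_even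
    (isUnit_det_of_right_inverse gramE8_mul_gramE8Inv) even_dotProduct_gramE8_mulVec_self hN
  have h00 := congrFun (congrFun hN 0) 0
  simp [hN0, gramE8] at h00
end

section
/- Let Q be the 8×8 star-shaped plumbing matrix Q_Γ(2) with central weight 2 and three chains with weight sequences (2), (2, 2) and (2, 2, 2, 2) (this is the E_8 intersection matrix of the positive definite E_8 plumbing bounded by the Poincaré homology sphere S²(2; 2, 3/2, 5/4)). Then there is no m ≥ 1 and no 8×m integer matrix M with M·Mᵀ = Q; that is, the E_8 intersection form does not embed into any standard diagonal lattice. -/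
open Matrix

/-- The 8×8 star-shaped plumbing matrix `Q_Γ(2)` with central weight `2` and three
chains with weight sequences `(2)`, `(2, 2)` and `(2, 2, 2, 2)`: the `E_8` intersection
matrix of the positive definite `E_8` plumbing bounded by the Poincaré homology sphere
`S²(2; 2, 3/2, 5/4)`. Vertex order: central vertex, chain 1, chain 2, chain 3. -/
def QE8 : Matrix (Fin 8) (Fin 8) ℤ :=
  !![ 2, -1, -1,  0, -1,  0,  0,  0;
     -1,  2,  0,  0,  0,  0,  0,  0;
     -1,  0,  2, -1,  0,  0,  0,  0;
      0,  0, -1,  2,  0,  0,  0,  0;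
     -1,  0,  0,  0,  2, -1,  0,  0;
      0,  0,  0,  0, -1,  2, -1,  0;
      0,  0,  0,  0,  0, -1,  2, -1;
      0,  0,  0,  0,  0,  0, -1,  2]

/-!
If `M * Mᵀ = Q` with `Q` unimodular, then `P = Mᵀ Q⁻¹ M` is the orthogonal projection of `ℤᵐ`
onto the row space of `M`: a symmetric idempotent integer matrix whose trace is the size of `Q`.
Symmetry and idempotence give `P i i = ∑ j, P i j ^ 2`, so `0 ≤ P i i ≤ 1` (apply this to `1 - P`
as well). On the other hand `P i i = vᵀ Q v` for the `i`-th column `v` of `Q⁻¹ M`, which is even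
when `Q` has even diagonal. Hence `P` has zero diagonal and trace `0`, a contradiction.
-/

namespace Matrix

variable {n m : Type*} [Fintype n]

theorem transpose_mul_mul_apply_self {R : Type*} [CommSemiring R] [Fintype m]
    (N : Matrix n m R) (Q : Matrix n n R) (i : m) :
    (Nᵀ * Q * N) i i = Nᵀ i ⬝ᵥ Q *ᵥ Nᵀ i := by
  rw [mul_apply', dotProduct_mulVec]
  rfl

theorem IsSymm.even_dotProduct_mulVec_self {Q : Matrix n n ℤ} (hQ : Q.IsSymm)
    (hdiag : ∀ i, Even (Q i i)) (c : n → ℤ) : Even (c ⬝ᵥ Q *ᵥ c) := by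
  let _ : LinearOrder n := LinearOrder.lift' _ (Fintype.equivFin n).injective
  let B : Matrix n n ℤ := of fun i j => if i < j then Q i j else if i = j then Q i i / 2 else 0
  have hB : Q = B + Bᵀ := by
    ext i j
    simp only [add_apply, transpose_apply, B, of_apply]
    rcases lt_trichotomy i j with h | rfl | h
    · rw [if_pos h, if_neg h.not_gt, if_neg h.ne', add_zero]
    · obtain ⟨k, hk⟩ := hdiag i
      simp only [lt_irrefl, if_true, if_false]
      omega
    · rw [if_neg h.not_gt, if_neg h.ne', if_pos h, hQ.apply, zero_add]
  refine ⟨c ⬝ᵥ B *ᵥ c, ?_⟩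
  rw [hB, add_mulVec, dotProduct_add, dotProduct_mulVec c Bᵀ, vecMul_transpose, dotProduct_comm]

theorem IsSymm.diag_nonneg_of_isIdempotentElem {R : Type*} [CommRing R] [LinearOrder R]
    [IsStrictOrderedRing R] {P : Matrix n n R} (hP : P.IsSymm) (hid : IsIdempotentElem P)
    (i : n) : 0 ≤ P i i := by
  rw [← hid.eq, mul_apply]
  exact Finset.sum_nonneg fun j _ => hP.apply i j ▸ mul_self_nonneg _

theorem IsSymm.diag_eq_zero_of_isIdempotentElem_of_even {P : Matrix n n ℤ}
    (hP : P.IsSymm) (hid : IsIdempotentElem P) (heven : ∀ i, Even (P i i)) (i : n) :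
    P i i = 0 := by
  classical
  have h0 := hP.diag_nonneg_of_isIdempotentElem hid i
  have h1 := (isSymm_one.sub hP).diag_nonneg_of_isIdempotentElem hid.one_sub i
  rw [sub_apply, one_apply_eq] at h1
  obtain ⟨k, hk⟩ := heven i
  omega

theorem mul_transpose_self_ne_of_isUnit_det_of_even [DecidableEq n] [Nonempty n] [Fintype m]
    {Q : Matrix n n ℤ} (hdet : IsUnit Q.det) (hdiag : ∀ i, Even (Q i i)) (M : Matrix n m ℤ) :
    M * Mᵀ ≠ Q := by
  classical
  intro hM
  have hQ : Q.IsSymm := by rw [← hM, IsSymm, transpose_mul, transpose_transpose]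
  obtain ⟨N, hN⟩ : ∃ N, N = Q⁻¹ * M := ⟨_, rfl⟩
  have hQN : Q * N = M := by rw [hN, ← Matrix.mul_assoc, mul_nonsing_inv _ hdet, Matrix.one_mul]
  have hPM : Mᵀ * N = Nᵀ * Q * N := by rw [← hQN, transpose_mul, hQ.eq]
  have hPsymm : (Nᵀ * Q * N).IsSymm := by
    rw [IsSymm, transpose_mul, transpose_mul, transpose_transpose, hQ.eq, Matrix.mul_assoc]
  have hPidem : IsIdempotentElem (Nᵀ * Q * N) := by
    calc Nᵀ * Q * N * (Nᵀ * Q * N) = Nᵀ * ((Q * N) * (Q * N)ᵀ) * N := by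
          rw [transpose_mul, hQ.eq]; simp only [Matrix.mul_assoc]
      _ = Nᵀ * Q * N := by rw [hQN, hM]
  have htrace : (Nᵀ * Q * N).trace = Fintype.card n := by
    rw [← hPM, hN, trace_mul_comm, Matrix.mul_assoc, hM, nonsing_inv_mul _ hdet, trace_one]
  have hdiagP (i : m) : Even ((Nᵀ * Q * N) i i) := by
    rw [transpose_mul_mul_apply_self]
    exact hQ.even_dotProduct_mulVec_self hdiag _
  have hzero : (Nᵀ * Q * N).trace = 0 := Finset.sum_eq_zero fun i _ =>
    hPsymm.diag_eq_zero_of_isIdempotentElem_of_even hPidem hdiagP i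
  have := Fintype.card_pos (α := n)
  omega

end Matrix

def QE8Inv : Matrix (Fin 8) (Fin 8) ℤ :=
  !![30, 15, 20, 10, 24, 18, 12, 6;
     15,  8, 10,  5, 12,  9,  6, 3;
     20, 10, 14,  7, 16, 12,  8, 4;
     10,  5,  7,  4,  8,  6,  4, 2;
     24, 12, 16,  8, 20, 15, 10, 5;
     18,  9, 12,  6, 15, 12,  8, 4;
     12,  6,  8,  4, 10,  8,  6, 3;
      6,  3,  4,  2,  5,  4,  3, 2]

theorem QE8_mul_QE8Inv : QE8 * QE8Inv = 1 := by decide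

theorem even_QE8_apply_self (i : Fin 8) : Even (QE8 i i) := by
  fin_cases i <;> decide

/-- The `E_8` intersection form does not embed into any standard diagonal lattice:
there is no integer matrix `M` with `M·Mᵀ = E_8`. -/
theorem stmt18 :
    ¬ ∃ (m : ℕ) (_ : 1 ≤ m) (M : Matrix (Fin 8) (Fin m) ℤ),
      M * M.transpose = QE8 := by
  rintro ⟨m, -, M, hM⟩
  exact mul_transpose_self_ne_of_isUnit_det_of_even
    (isUnit_det_of_right_inverse QE8_mul_QE8Inv) even_QE8_apply_self M hM
end
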